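/- The CPS translation preserves types: if a term e has type τ with trail types μ_α, μ_β, meta-continuation types σ_α, σ_β, and answer types α, β in the source calculus λ_D (i.e., Γ ⊢ e : τ ⟨μ_α, σ_α⟩ α ⟨μ_β, σ_β⟩ β), then for any environment ρ respecting the CPS-translated type environment Γ*, the CPS interpretation ⟦e⟧ρ has type (τ* → μ_α* → σ_α* → α*) → μ_β* → σ_β* → β* in the simply-typed target calculus λ_C. -/
import Mathlib


namespace FourD

/- The source calculus λ_D: types, trail types, meta-continuation types,
   terms with the four delimited control operators, the typing constraints
   `compatible` and `id-cont-type`, and the type system of λ_D. -/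

mutual
inductive Ty : Type
  | nat : Ty
  | arrow : Ty → Ty → Tr → Mc → Ty → Tr → Mc → Ty → Ty
inductive Tr : Type
  | empty : Tr
  | tr : Ty → Tr → Mc → Ty → Tr
inductive Mc : Type
  | empty : Mc
  | cons : Ty → Tr → Mc → Ty → Tr → Mc → Mc
end

inductive Tm : Type
  | var : ℕ → Tm
  | num : ℕ → Tm
  | lam : Tm → Tm
  | app : Tm → Tm → Tm
  | shift : Tm → Tm
  | control : Tm → Tm
  | shift0 : Tm → Tm
  | control0 : Tm → Tm
  | reset : Tm → Tm

inductive Compatible : Tr → Tr → Tr → Type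
  | leftEmpty (μ : Tr) : Compatible .empty μ μ
  | rightEmpty (μ : Tr) : Compatible μ .empty μ
  | cons {τ1 : Ty} {μ1 : Tr} {σ1 : Mc} {τ1' τ2 : Ty} {μ2 : Tr} {σ2 : Mc} {τ2' : Ty} {μ3 : Tr} :
      Compatible (.tr τ2 μ2 σ2 τ2') μ3 μ1 →
      Compatible (.tr τ1 μ1 σ1 τ1') (.tr τ2 μ2 σ2 τ2') (.tr τ1 μ3 σ1 τ1')

inductive IdContType : Ty → Tr → Mc → Ty → Type
  | idEmpty (γ : Ty) : IdContType γ .empty .empty γ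
  | idTrail (γ : Ty) (σ : Mc) (γ' : Ty) : IdContType γ (.tr γ .empty σ γ') σ γ'
  | idMeta (γ : Ty) (μ0 : Tr) (σ0 : Mc) (γ' : Ty) :
      IdContType γ .empty (.cons γ μ0 σ0 γ' μ0 σ0) γ'

/-- The type system of λ_D: `HasTy Γ e τ μα σα α μβ σβ β` is the judgment
    Γ ⊢ e : τ ⟨μα, σα⟩ α ⟨μβ, σβ⟩ β. -/
inductive HasTy : List Ty → Tm → Ty → Tr → Mc → Ty → Tr → Mc → Ty → Type
  | var {Γ : List Ty} (x : ℕ) {τ : Ty} {μ : Tr} {σ : Mc} {α : Ty} :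
      Γ[x]? = some τ → HasTy Γ (.var x) τ μ σ α μ σ α
  | num {Γ : List Ty} (n : ℕ) {μ : Tr} {σ : Mc} {α : Ty} :
      HasTy Γ (.num n) .nat μ σ α μ σ α
  | lam {Γ : List Ty} {e : Tm} {τ1 τ2 : Ty} {μα : Tr} {σα : Mc} {a : Ty} {μβ : Tr} {σβ : Mc}
      {b : Ty} {μ : Tr} {σ : Mc} {γ : Ty} :
      HasTy (τ1 :: Γ) e τ2 μα σα a μβ σβ b →
      HasTy Γ (.lam e) (.arrow τ1 τ2 μα σα a μβ σβ b) μ σ γ μ σ γ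
  | app {Γ : List Ty} {e1 e2 : Tm} {τ1 τ2 : Ty} {μα : Tr} {σα : Mc} {a : Ty} {μβ : Tr} {σβ : Mc}
      {b : Ty} {μγ : Tr} {σγ : Mc} {γ : Ty} {μδ : Tr} {σδ : Mc} {δ : Ty} :
      HasTy Γ e1 (.arrow τ1 τ2 μα σα a μβ σβ b) μγ σγ γ μδ σδ δ →
      HasTy Γ e2 τ1 μβ σβ b μγ σγ γ →
      HasTy Γ (.app e1 e2) τ2 μα σα a μδ σδ δ
  | reset {Γ : List Ty} {e : Tm} {γ : Ty} {μid : Tr} {σid : Mc} {γ' τ : Ty} {μα : Tr} {σα : Mc}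
      {α : Ty} {μβ : Tr} {σβ : Mc} {β : Ty} :
      IdContType γ μid σid γ' →
      HasTy Γ e γ μid σid γ' .empty (.cons τ μα σα α μβ σβ) β →
      HasTy Γ (.reset e) τ μα σα α μβ σβ β
  | shift {Γ : List Ty} {e : Tm} {γ : Ty} {μid : Tr} {σid : Mc} {γ' τ τ1 : Ty} {μ1 : Tr}
      {σ1 : Mc} {τ2 : Ty} {μ' : Tr} {σ' : Mc} {α : Ty} {μβ : Tr} {σβ : Mc} {β : Ty} :
      IdContType γ μid σid γ' →
      HasTy ((.arrow τ τ1 μ1 σ1 τ2 μ' σ' α) :: Γ) e γ μid σid γ' .empty σβ β →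
      HasTy Γ (.shift e) τ μβ (.cons τ1 μ1 σ1 τ2 μ' σ') α μβ σβ β
  | control {Γ : List Ty} {e : Tm} {γ : Ty} {μid : Tr} {σid : Mc} {γ' τ τ1 : Ty} {μ1 : Tr}
      {σ1 : Mc} {τ2 : Ty} {μ2 μ3 μα : Tr} {σα : Mc} {α : Ty} {μβ : Tr} {σβ : Mc} {β : Ty} :
      IdContType γ μid σid γ' →
      Compatible (.tr τ1 μ1 σ1 τ2) μ2 μ3 →
      Compatible μβ μ3 μα →
      HasTy ((.arrow τ τ1 μ1 σ1 τ2 μ2 σα α) :: Γ) e γ μid σid γ' .empty σβ β →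
      HasTy Γ (.control e) τ μα σα α μβ σβ β
  | shift0 {Γ : List Ty} {e : Tm} {τ τ1 : Ty} {μ1 : Tr} {σ1 : Mc} {τ2 : Ty} {μ' : Tr} {σ' : Mc}
      {α τ0 : Ty} {μ0 : Tr} {σ0 : Mc} {τ0' : Ty} {μ0' : Tr} {σ0' : Mc} {μβ : Tr} {β : Ty} :
      HasTy ((.arrow τ τ1 μ1 σ1 τ2 μ' σ' α) :: Γ) e τ0 μ0 σ0 τ0' μ0' σ0' β →
      HasTy Γ (.shift0 e) τ μβ (.cons τ1 μ1 σ1 τ2 μ' σ') α μβ (.cons τ0 μ0 σ0 τ0' μ0' σ0') β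
  | control0 {Γ : List Ty} {e : Tm} {τ τ1 : Ty} {μ1 : Tr} {σ1 : Mc} {τ2 : Ty} {μ2 μ3 μα : Tr}
      {σα : Mc} {α τ0 : Ty} {μ0 : Tr} {σ0 : Mc} {τ0' : Ty} {μ0' : Tr} {σ0' : Mc} {μβ : Tr} {β : Ty} :
      Compatible (.tr τ1 μ1 σ1 τ2) μ2 μ3 →
      Compatible μβ μ3 μα →
      HasTy ((.arrow τ τ1 μ1 σ1 τ2 μ2 σα α) :: Γ) e τ0 μ0 σ0 τ0' μ0' σ0' β →
      HasTy Γ (.control0 e) τ μα σα α μβ (.cons τ0 μ0 σ0 τ0' μ0' σ0') β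

/- The target calculus λ_C: simply-typed λ-calculus with unit and pairs,
   its typing judgment, the CPS translation of λ_D types, and the
   (type-directed) CPS interpreter translating λ_D into λ_C. -/

inductive CTy : Type
  | nat : CTy
  | unit : CTy
  | arrow : CTy → CTy → CTy
  | prod : CTy → CTy → CTy

mutual
def cpsTy : Ty → CTy
  | .nat => .nat
  | .arrow t1 t2 μα σα a μβ σβ b =>
      .arrow (cpsTy t1)
        (.arrow (.arrow (cpsTy t2) (.arrow (cpsTr μα) (.arrow (cpsMc σα) (cpsTy a))))
          (.arrow (cpsTr μβ) (.arrow (cpsMc σβ) (cpsTy b))))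
def cpsTr : Tr → CTy
  | .empty => .unit
  | .tr t1 μ σ t2 => .arrow (cpsTy t1) (.arrow (cpsTr μ) (.arrow (cpsMc σ) (cpsTy t2)))
def cpsMc : Mc → CTy
  | .empty => .unit
  | .cons t1 μ1 σ1 t2 μ σ =>
      .prod (.prod (.arrow (cpsTy t1) (.arrow (cpsTr μ1) (.arrow (cpsMc σ1) (cpsTy t2))))
          (cpsTr μ))
        (cpsMc σ)
end

inductive CTm : Type
  | var : ℕ → CTm
  | num : ℕ → CTm
  | unit : CTm
  | lam : CTm → CTm
  | app : CTm → CTm → CTm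
  | pair : CTm → CTm → CTm
  | fst : CTm → CTm
  | snd : CTm → CTm

def liftR (f : ℕ → ℕ) : ℕ → ℕ
  | 0 => 0
  | n + 1 => f n + 1

def rename (f : ℕ → ℕ) : CTm → CTm
  | .var n => .var (f n)
  | .num n => .num n
  | .unit => .unit
  | .lam e => .lam (rename (liftR f) e)
  | .app a b => .app (rename f a) (rename f b)
  | .pair a b => .pair (rename f a) (rename f b)
  | .fst a => .fst (rename f a)
  | .snd a => .snd (rename f a)

def liftS (s : ℕ → CTm) : ℕ → CTm
  | 0 => .var 0
  | n + 1 => rename (· + 1) (s n)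

def subst (s : ℕ → CTm) : CTm → CTm
  | .var n => s n
  | .num n => .num n
  | .unit => .unit
  | .lam e => .lam (subst (liftS s) e)
  | .app a b => .app (subst s a) (subst s b)
  | .pair a b => .pair (subst s a) (subst s b)
  | .fst a => .fst (subst s a)
  | .snd a => .snd (subst s a)

/-- Typing judgment of λ_C. -/
inductive CHasTy : List CTy → CTm → CTy → Prop
  | var {Γ : List CTy} {n : ℕ} {A : CTy} : Γ[n]? = some A → CHasTy Γ (.var n) A
  | num {Γ : List CTy} {n : ℕ} : CHasTy Γ (.num n) .nat
  | unit {Γ : List CTy} : CHasTy Γ .unit .unit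
  | lam {Γ : List CTy} {e : CTm} {A B : CTy} : CHasTy (A :: Γ) e B → CHasTy Γ (.lam e) (.arrow A B)
  | app {Γ : List CTy} {f a : CTm} {A B : CTy} :
      CHasTy Γ f (.arrow A B) → CHasTy Γ a A → CHasTy Γ (.app f a) B
  | pair {Γ : List CTy} {a b : CTm} {A B : CTy} :
      CHasTy Γ a A → CHasTy Γ b B → CHasTy Γ (.pair a b) (.prod A B)
  | fst {Γ : List CTy} {a : CTm} {A B : CTy} : CHasTy Γ a (.prod A B) → CHasTy Γ (.fst a) A
  | snd {Γ : List CTy} {a : CTm} {A B : CTy} : CHasTy Γ a (.prod A B) → CHasTy Γ (.snd a) B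

def lam3 (b : CTm) : CTm := .lam (.lam (.lam b))

def app3 (f a b c : CTm) : CTm := .app (.app (.app f a) b) c

/-- The trail cons operation `k :: t` (function composition), defined by
    recursion on the compatibility constraint. -/
def consTm : {μ1 μ2 μ3 : Tr} → Compatible μ1 μ2 μ3 → CTm → CTm → CTm
  | _, _, _, .leftEmpty _, _, t => t
  | _, _, _, .rightEmpty _, k, _ => k
  | _, _, _, .cons c, k, t =>
      lam3 (app3 (rename (· + 3) k) (.var 2) (consTm c (rename (· + 3) t) (.var 1)) (.var 0))

/-- The trail append operation `t1 @ t2` (function composition). -/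
def appendTm : {μ1 μ2 μ3 : Tr} → Compatible μ1 μ2 μ3 → CTm → CTm → CTm
  | _, _, _, .leftEmpty _, _, t2 => t2
  | _, _, _, .rightEmpty _, t1, _ => t1
  | _, _, _, c@(.cons _), t1, t2 => consTm c t1 t2

/-- The initial continuation id-k = λv.λt.λm. case (t, m) of ..., defined by
    case analysis along the id-cont-type constraint. -/
def idkTm : {γ : Ty} → {μ : Tr} → {σ : Mc} → {γ' : Ty} → IdContType γ μ σ γ' → CTm
  | _, _, _, _, .idEmpty _ => lam3 (.var 2)
  | _, _, _, _, .idTrail _ _ _ => lam3 (app3 (.var 1) (.var 2) .unit (.var 0))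
  | _, _, _, _, .idMeta _ _ _ _ =>
      lam3 (app3 (.fst (.fst (.var 0))) (.var 2) (.snd (.fst (.var 0))) (.snd (.var 0)))

/-- Substitution that replaces the captured-continuation variable k (source
    variable 0) by the term K and shifts the remaining free variables under
    the three binders λκ.λt.λm. -/
def kSubst (K : CTm) : ℕ → CTm
  | 0 => K
  | i + 1 => .var (i + 3)

/-- The continuation captured by shift/shift0:
    λv.λκ'.λt'.λm'. κ v t ((κ', t') :: m'). -/
def kShift : CTm :=
  .lam (lam3 (app3 (.var 6) (.var 3) (.var 5) (.pair (.pair (.var 2) (.var 1)) (.var 0))))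

/-- The continuation captured by control/control0:
    λv.λκ'.λt'.λm'. κ v (t @ (κ' :: t')) m'. -/
def kControl {a b c d f : Tr} (c1 : Compatible a b c) (c2 : Compatible d c f) : CTm :=
  .lam (lam3 (app3 (.var 6) (.var 3) (appendTm c2 (.var 5) (consTm c1 (.var 2) (.var 1)))
    (.var 0)))

/-- The CPS interpreter ⟦e⟧, defined on λ_D typing derivations; free λ_D
    variables are mapped to the λ_C variables with the same indices. -/
def cps : {Γ : List Ty} → {e : Tm} → {τ : Ty} → {μα : Tr} → {σα : Mc} → {α : Ty} →
    {μβ : Tr} → {σβ : Mc} → {β : Ty} → HasTy Γ e τ μα σα α μβ σβ β → CTm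
  | _, _, _, _, _, _, _, _, _, .var x _ =>
      lam3 (app3 (.var 2) (.var (x + 3)) (.var 1) (.var 0))
  | _, _, _, _, _, _, _, _, _, .num n =>
      lam3 (app3 (.var 2) (.num n) (.var 1) (.var 0))
  | _, _, _, _, _, _, _, _, _, .lam d =>
      lam3 (app3 (.var 2)
        (.lam (lam3 (app3 (rename (fun i => match i with | 0 => 3 | j + 1 => j + 7) (cps d))
          (.var 2) (.var 1) (.var 0))))
        (.var 1) (.var 0))
  | _, _, _, _, _, _, _, _, _, .app d1 d2 =>
      lam3 (app3 (rename (· + 3) (cps d1))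
        (lam3 (app3 (rename (· + 6) (cps d2))
          (lam3 (.app (.app (.app (.app (.var 5) (.var 2)) (.var 8)) (.var 1)) (.var 0)))
          (.var 1) (.var 0)))
        (.var 1) (.var 0))
  | _, _, _, _, _, _, _, _, _, .reset ic d =>
      lam3 (app3 (rename (· + 3) (cps d)) (idkTm ic) .unit
        (.pair (.pair (.var 2) (.var 1)) (.var 0)))
  | _, _, _, _, _, _, _, _, _, .shift ic d =>
      lam3 (app3 (subst (kSubst kShift) (cps d)) (idkTm ic) .unit (.var 0))
  | _, _, _, _, _, _, _, _, _, .control ic c1 c2 d =>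
      lam3 (app3 (subst (kSubst (kControl c1 c2)) (cps d)) (idkTm ic) .unit (.var 0))
  | _, _, _, _, _, _, _, _, _, .shift0 d =>
      lam3 (app3 (subst (kSubst kShift) (cps d)) (.fst (.fst (.var 0)))
        (.snd (.fst (.var 0))) (.snd (.var 0)))
  | _, _, _, _, _, _, _, _, _, .control0 c1 c2 d =>
      lam3 (app3 (subst (kSubst (kControl c1 c2)) (cps d)) (.fst (.fst (.var 0)))
        (.snd (.fst (.var 0))) (.snd (.var 0)))

/- ===== Auxiliary development for the type-preservation proof ===== -/

/-- Shorthand for the CPS continuation type τ* → μ* → σ* → α*. -/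
abbrev KTy (τ : Ty) (μ : Tr) (σ : Mc) (α : Ty) : CTy :=
  .arrow (cpsTy τ) (.arrow (cpsTr μ) (.arrow (cpsMc σ) (cpsTy α)))

/-- Shorthand for the CPS computation type. -/
abbrev CompTy (τ : Ty) (μα : Tr) (σα : Mc) (α : Ty) (μβ : Tr) (σβ : Mc) (β : Ty) : CTy :=
  .arrow (KTy τ μα σα α) (.arrow (cpsTr μβ) (.arrow (cpsMc σβ) (cpsTy β)))

lemma ge0 {α : Type*} {A : α} {L : List α} : (A :: L)[0]? = some A := by simp
lemma ge1 {α : Type*} {B0 A : α} {L : List α} : (B0 :: A :: L)[1]? = some A := by simp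
lemma ge2 {α : Type*} {B1 B0 A : α} {L : List α} : (B1 :: B0 :: A :: L)[2]? = some A := by simp
lemma ge3 {α : Type*} {B2 B1 B0 A : α} {L : List α} :
    (B2 :: B1 :: B0 :: A :: L)[3]? = some A := by simp

lemma getElem?_cons3 {α : Type*} (A B C : α) (L : List α) (x : ℕ) :
    (A :: B :: C :: L)[x + 3]? = L[x]? := by
  simp [show x + 3 = x + 1 + 1 + 1 from rfl, List.getElem?_cons_succ]

lemma getElem?_cons4 {α : Type*} (A B C D : α) (L : List α) (x : ℕ) :
    (A :: B :: C :: D :: L)[x + 4]? = L[x]? := by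
  simp [show x + 4 = x + 1 + 1 + 1 + 1 from rfl, List.getElem?_cons_succ]

lemma getElem?_cons7 {α : Type*} (A B C D E F G : α) (L : List α) (x : ℕ) :
    (A :: B :: C :: D :: E :: F :: G :: L)[x + 7]? = L[x]? := by
  simp [show x + 7 = x + 1 + 1 + 1 + 1 + 1 + 1 + 1 from rfl, List.getElem?_cons_succ]

lemma var0 {Γ : List CTy} {A : CTy} : CHasTy (A :: Γ) (.var 0) A := .var ge0
lemma var1 {Γ : List CTy} {B0 A : CTy} : CHasTy (B0 :: A :: Γ) (.var 1) A := .var ge1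
lemma var2 {Γ : List CTy} {B1 B0 A : CTy} : CHasTy (B1 :: B0 :: A :: Γ) (.var 2) A := .var ge2
lemma var3 {Γ : List CTy} {B2 B1 B0 A : CTy} :
    CHasTy (B2 :: B1 :: B0 :: A :: Γ) (.var 3) A := .var ge3

lemma rename_ty {Γ : List CTy} {e : CTm} {A : CTy}
    (h : CHasTy Γ e A) :
    ∀ {Δ : List CTy} {f : ℕ → ℕ}, (∀ n B, Γ[n]? = some B → Δ[f n]? = some B) →
      CHasTy Δ (rename f e) A := by
  induction h with
  | var h => exact fun hf => .var (hf _ _ h)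
  | num => exact fun _ => .num
  | unit => exact fun _ => .unit
  | lam h ih =>
      intro Δ f hf
      refine .lam (ih ?_)
      intro n B hn
      cases n with
      | zero => simp at hn; simp [liftR, hn]
      | succ n =>
          simp only [List.getElem?_cons_succ] at hn
          simpa [liftR] using hf n B hn
  | app h1 h2 ih1 ih2 => exact fun hf => .app (ih1 hf) (ih2 hf)
  | pair h1 h2 ih1 ih2 => exact fun hf => .pair (ih1 hf) (ih2 hf)
  | fst h ih => exact fun hf => .fst (ih hf)
  | snd h ih => exact fun hf => .snd (ih hf)

lemma subst_ty {Γ : List CTy} {e : CTm} {A : CTy}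
    (h : CHasTy Γ e A) :
    ∀ {Δ : List CTy} {s : ℕ → CTm}, (∀ n B, Γ[n]? = some B → CHasTy Δ (s n) B) →
      CHasTy Δ (subst s e) A := by
  induction h with
  | var h => exact fun hs => hs _ _ h
  | num => exact fun _ => .num
  | unit => exact fun _ => .unit
  | lam h ih =>
      intro Δ s hs
      refine .lam (ih ?_)
      intro n B hn
      cases n with
      | zero =>
          simp at hn; subst hn
          exact var0
      | succ n =>
          simp only [List.getElem?_cons_succ] at hn
          show CHasTy _ (liftS s (n + 1)) B
          simp only [liftS]
          exact rename_ty (hs n B hn) (fun m C hm => by simpa using hm)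
  | app h1 h2 ih1 ih2 => exact fun hs => .app (ih1 hs) (ih2 hs)
  | pair h1 h2 ih1 ih2 => exact fun hs => .pair (ih1 hs) (ih2 hs)
  | fst h ih => exact fun hs => .fst (ih hs)
  | snd h ih => exact fun hs => .snd (ih hs)

lemma lam3_ty {Γ : List CTy} {b : CTm} {A B C D : CTy}
    (h : CHasTy (C :: B :: A :: Γ) b D) :
    CHasTy Γ (lam3 b) (.arrow A (.arrow B (.arrow C D))) := .lam (.lam (.lam h))

lemma app3_ty {Γ : List CTy} {f a b c : CTm} {A B C D : CTy}
    (hf : CHasTy Γ f (.arrow A (.arrow B (.arrow C D))))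
    (ha : CHasTy Γ a A) (hb : CHasTy Γ b B) (hc : CHasTy Γ c C) :
    CHasTy Γ (app3 f a b c) D := .app (.app (.app hf ha) hb) hc

lemma shift3_ok {Δ : List CTy} {A B C : CTy} :
    ∀ n (D : CTy), Δ[n]? = some D → (A :: B :: C :: Δ)[n + 3]? = some D := by
  intro n D h; rw [getElem?_cons3]; exact h

lemma varPlus3 {Δ : List CTy} {A B C D : CTy} {n : ℕ}
    (h : CHasTy Δ (.var n) D) : CHasTy (A :: B :: C :: Δ) (.var (n + 3)) D := by
  cases h with
  | var hn => exact .var (by rw [getElem?_cons3]; exact hn)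

lemma consTm_ty : ∀ {μ1 μ2 μ3 : Tr} (c : Compatible μ1 μ2 μ3) {Γ : List CTy} {k t : CTm},
    CHasTy Γ k (cpsTr μ1) → CHasTy Γ t (cpsTr μ2) → CHasTy Γ (consTm c k t) (cpsTr μ3)
  | _, _, _, .leftEmpty _, _, _, _, _, ht => ht
  | _, _, _, .rightEmpty _, _, _, _, hk, _ => hk
  | _, _, _, .cons c, Γ, k, t, hk, ht => by
      show CHasTy Γ (lam3 _) (cpsTr (.tr _ _ _ _))
      simp only [cpsTr] at hk ⊢
      exact lam3_ty (app3_ty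
        (rename_ty hk (shift3_ok (Δ := Γ)))
        var2
        (consTm_ty c (rename_ty ht (shift3_ok (Δ := Γ))) var1)
        var0)

lemma appendTm_ty {μ1 μ2 μ3 : Tr} (c : Compatible μ1 μ2 μ3) {Γ : List CTy} {t1 t2 : CTm}
    (h1 : CHasTy Γ t1 (cpsTr μ1)) (h2 : CHasTy Γ t2 (cpsTr μ2)) :
    CHasTy Γ (appendTm c t1 t2) (cpsTr μ3) := by
  cases c with
  | leftEmpty => exact h2
  | rightEmpty => exact h1
  | cons c => exact consTm_ty _ h1 h2

lemma idkTm_ty {γ : Ty} {μ : Tr} {σ : Mc} {γ' : Ty} (ic : IdContType γ μ σ γ') {Γ : List CTy} :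
    CHasTy Γ (idkTm ic) (KTy γ μ σ γ') := by
  cases ic with
  | idEmpty =>
      exact lam3_ty var2
  | idTrail =>
      refine lam3_ty (app3_ty (f := .var 1) ?_ var2 .unit var0)
      exact .var (show _ = some (cpsTr (.tr _ .empty _ _)) from ge1)
  | idMeta =>
      exact lam3_ty (app3_ty (.fst (.fst var0)) var2 (.snd (.fst var0)) (.snd var0))

lemma kShift_ty {Δ : List CTy} {τ τ1 : Ty} {μ1 : Tr} {σ1 : Mc} {τ2 : Ty} {μ' : Tr} {σ' : Mc}
    {α : Ty} {μβ : Tr}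
    (h2 : Δ[2]? = some (KTy τ μβ (.cons τ1 μ1 σ1 τ2 μ' σ') α))
    (h1 : Δ[1]? = some (cpsTr μβ)) :
    CHasTy Δ kShift (cpsTy (.arrow τ τ1 μ1 σ1 τ2 μ' σ' α)) := by
  show CHasTy Δ (.lam (lam3 _)) (cpsTy (.arrow τ τ1 μ1 σ1 τ2 μ' σ' α))
  simp only [cpsTy]
  refine .lam (lam3_ty (app3_ty (B := cpsTr μβ) (.var ?_) var3 (.var ?_)
    (.pair (.pair var2 var1) var0)))
  · rw [show (6 : ℕ) = 2 + 4 from rfl, getElem?_cons4]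
    rw [h2]
    simp [cpsMc]
  · rw [show (5 : ℕ) = 1 + 4 from rfl, getElem?_cons4]
    exact h1

lemma kControl_ty {Δ : List CTy} {τ τ1 : Ty} {μ1 : Tr} {σ1 : Mc} {τ2 : Ty} {μ2 μ3 μα : Tr}
    {σα : Mc} {α : Ty} {μβ : Tr}
    (c1 : Compatible (.tr τ1 μ1 σ1 τ2) μ2 μ3) (c2 : Compatible μβ μ3 μα)
    (h2 : Δ[2]? = some (KTy τ μα σα α))
    (h1 : Δ[1]? = some (cpsTr μβ)) :
    CHasTy Δ (kControl c1 c2) (cpsTy (.arrow τ τ1 μ1 σ1 τ2 μ2 σα α)) := by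
  show CHasTy Δ (.lam (lam3 _)) (cpsTy (.arrow τ τ1 μ1 σ1 τ2 μ2 σα α))
  simp only [cpsTy]
  refine .lam (lam3_ty (app3_ty (.var ?_) var3
    (appendTm_ty c2 (.var ?_)
      (consTm_ty c1 (.var (show _ = some (cpsTr (.tr τ1 μ1 σ1 τ2)) by simp [cpsTr])) var1))
    var0))
  · rw [show (6 : ℕ) = 2 + 4 from rfl, getElem?_cons4]
    exact h2
  · rw [show (5 : ℕ) = 1 + 4 from rfl, getElem?_cons4]
    exact h1

lemma kSubst_ty {Δ Γ : List CTy} {A : CTy} {K : CTm}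
    (hK : CHasTy Δ K A) (hΔ : ∀ i, Δ[i + 3]? = Γ[i]?) :
    ∀ n B, (A :: Γ)[n]? = some B → CHasTy Δ (kSubst K n) B := by
  intro n B h
  cases n with
  | zero => simp at h; subst h; exact hK
  | succ n =>
      simp only [List.getElem?_cons_succ] at h
      exact .var (by rw [hΔ]; exact h)

/-- Main lemma: the CPS translation of a well-typed λ_D term is well typed in
    the CPS-translated type environment. -/
lemma cps_ty {Γ : List Ty} {e : Tm} {τ : Ty} {μα : Tr} {σα : Mc} {α : Ty}
    {μβ : Tr} {σβ : Mc} {β : Ty} (d : HasTy Γ e τ μα σα α μβ σβ β) :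
    CHasTy (Γ.map cpsTy) (cps d) (CompTy τ μα σα α μβ σβ β) := by
  induction d with
  | var x h =>
      refine lam3_ty (app3_ty var2 (.var ?_) var1 var0)
      rw [getElem?_cons3]
      simp [h]
  | num n =>
      exact lam3_ty (app3_ty var2 .num var1 var0)
  | lam d ih =>
      refine lam3_ty (app3_ty var2 ?_ var1 var0)
      show CHasTy _ _ (cpsTy (.arrow _ _ _ _ _ _ _ _))
      simp only [cpsTy]
      refine .lam (lam3_ty (app3_ty (rename_ty ih ?_) var2 var1 var0))
      intro n B h
      cases n with
      | zero => simp at h; simp [h]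
      | succ n =>
          simp only [List.map_cons, List.getElem?_cons_succ] at h
          rw [getElem?_cons7]; exact h
  | app d1 d2 ih1 ih2 =>
      refine lam3_ty (app3_ty (rename_ty ih1 shift3_ok) ?_ var1 var0)
      refine lam3_ty (app3_ty
        (rename_ty ih2 (fun n B h => by
          rw [show ∀ m : ℕ, m + 6 = m + 3 + 3 from fun _ => rfl, getElem?_cons3,
            getElem?_cons3]; exact h))
        ?_ var1 var0)
      exact lam3_ty (.app (.app (.app (.app (varPlus3 var2) var2)
        (varPlus3 (varPlus3 var2))) var1) var0)
  | reset ic d ih =>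
      exact lam3_ty (app3_ty (rename_ty ih shift3_ok)
        (idkTm_ty ic) .unit (.pair (.pair var2 var1) var0))
  | shift ic d ih =>
      exact lam3_ty (app3_ty
        (subst_ty ih (kSubst_ty (kShift_ty ge2 ge1) (fun i => getElem?_cons3 _ _ _ _ _)))
        (idkTm_ty ic) .unit var0)
  | control ic c1 c2 d ih =>
      exact lam3_ty (app3_ty
        (subst_ty ih (kSubst_ty (kControl_ty c1 c2 ge2 ge1) (fun i => getElem?_cons3 _ _ _ _ _)))
        (idkTm_ty ic) .unit var0)
  | shift0 d ih =>
      exact lam3_ty (app3_ty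
        (subst_ty ih (kSubst_ty (kShift_ty ge2 ge1) (fun i => getElem?_cons3 _ _ _ _ _)))
        (.fst (.fst var0)) (.snd (.fst var0)) (.snd var0))
  | control0 c1 c2 d ih =>
      exact lam3_ty (app3_ty
        (subst_ty ih (kSubst_ty (kControl_ty c1 c2 ge2 ge1) (fun i => getElem?_cons3 _ _ _ _ _)))
        (.fst (.fst var0)) (.snd (.fst var0)) (.snd var0))

/-- Theorem 1 (Type Preservation of CPS Translation):
    if Γ ⊢ e : τ ⟨μα, σα⟩ α ⟨μβ, σβ⟩ β in λ_D, then for any environment ρ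
    respecting Γ* (closed λ_C terms of the CPS-translated types), the CPS
    interpretation ⟦e⟧ρ has type (τ* → μα* → σα* → α*) → μβ* → σβ* → β*
    in λ_C. -/
theorem cps_type_preservation {Γ : List Ty} {e : Tm} {τ : Ty} {μα : Tr} {σα : Mc} {α : Ty}
    {μβ : Tr} {σβ : Mc} {β : Ty}
    (d : HasTy Γ e τ μα σα α μβ σβ β) (ρ : ℕ → CTm)
    (hρ : ∀ x τ', Γ[x]? = some τ' → CHasTy [] (ρ x) (cpsTy τ')) :
    CHasTy [] (subst ρ (cps d))
      (.arrow (.arrow (cpsTy τ) (.arrow (cpsTr μα) (.arrow (cpsMc σα) (cpsTy α))))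
        (.arrow (cpsTr μβ) (.arrow (cpsMc σβ) (cpsTy β)))) := by
  have h1 := cps_ty d
  refine subst_ty h1 ?_
  intro n B h
  rw [List.getElem?_map] at h
  cases hn : Γ[n]? with
  | none => rw [hn] at h; simp at h
  | some t => rw [hn] at h; simp at h; subst h; exact hρ n t hn

end FourD
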